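/- arXiv:1506.05171 — 5 statements merged into one kernel-verified Lean document; each statement's English description precedes it below -/
import Mathlib

section
/- Suppose A ∈ Rⁿˣⁿ is diagonally stable, i.e., there exists a positive diagonal matrix P with AᵀP + PA negative definite. If x* ∈ Rⁿ has strictly positive entries and satisfies r + A x* = 0, then the function V(x) = 2 Σᵢ pᵢ (xᵢ − x*ᵢ − x*ᵢ log(xᵢ/x*ᵢ)), defined on the positive orthant, satisfies: V(x) ≥ 0 with equality iff x = x*, and its derivative along solutions of ẋ = diag(x)(r + Ax) equals (x − x*)ᵀ(AᵀP + PA)(x − x*), hence is negative for x ≠ x*. -/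
/-!
Each summand of `V` is `x*ᵢ (yᵢ - 1 - log yᵢ)` with `yᵢ = xᵢ / x*ᵢ`, which is nonnegative and
vanishes only at `yᵢ = 1` because `log y ≤ y - 1` with equality only at `y = 1`. Along the flow,
`d/dt log xᵢ = rᵢ + (Ax)ᵢ`, so the logarithm cancels the factor `xᵢ` of the vector field and
`V̇ = 2 Σᵢ pᵢ (xᵢ - x*ᵢ)(rᵢ + (Ax)ᵢ)`; since `r = -A x*`, this is
`2 (x - x*)ᵀ P A (x - x*) = (x - x*)ᵀ (AᵀP + PA) (x - x*)`.
-/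

open Matrix

namespace Real

theorem sub_sub_mul_log_div_nonneg {a b : ℝ} (ha : 0 < a) (hb : 0 < b) :
    0 ≤ a - b - b * log (a / b) := by
  have := mul_le_mul_of_nonneg_left (log_le_sub_one_of_pos (div_pos ha hb)) hb.le
  rw [mul_sub, mul_div_cancel₀ a hb.ne'] at this
  linarith

theorem sub_sub_mul_log_div_eq_zero_iff {a b : ℝ} (ha : 0 < a) (hb : 0 < b) :
    a - b - b * log (a / b) = 0 ↔ a = b := by
  refine ⟨fun h => ?_, fun h => by simp [h, hb.ne']⟩
  by_contra hne
  have hab : a / b ≠ 1 := by rwa [Ne, div_eq_one_iff_eq hb.ne']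
  have := mul_lt_mul_of_pos_left (log_lt_sub_one_of_pos (div_pos ha hb) hab) hb
  rw [mul_sub, mul_div_cancel₀ a hb.ne'] at this
  linarith

end Real

theorem HasDerivAt.sub_sub_mul_log_div {f : ℝ → ℝ} {g b t : ℝ}
    (hf : HasDerivAt f (f t * g) t) (hft : f t ≠ 0) (hb : b ≠ 0) :
    HasDerivAt (fun s => f s - b - b * Real.log (f s / b)) ((f t - b) * g) t := by
  have hlog := (hf.div_const b).log (div_ne_zero hft hb)
  refine ((hf.sub_const b).fun_sub (hlog.const_mul b)).congr_deriv ?_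
  field_simp

theorem dotProduct_transpose_mul_diagonal_add_diagonal_mul_mulVec {n R : Type*} [Fintype n]
    [DecidableEq n] [CommRing R] (A : Matrix n n R) (p v : n → R) :
    v ⬝ᵥ ((Aᵀ * diagonal p + diagonal p * A) *ᵥ v) = 2 * ∑ i, p i * v i * (A *ᵥ v) i := by
  rw [add_mulVec, dotProduct_add, ← mulVec_mulVec, ← mulVec_mulVec, dotProduct_mulVec,
    vecMul_transpose, dotProduct_comm]
  simp only [dotProduct, mulVec_diagonal, ← Finset.sum_add_distrib, Finset.mul_sum]
  exact Finset.sum_congr rfl fun i _ => by ring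

noncomputable def gohLyapunov {n : Type*} [Fintype n] (p xs x : n → ℝ) : ℝ :=
  2 * ∑ i, p i * (x i - xs i - xs i * Real.log (x i / xs i))

section GohLyapunov

variable {n : Type*} [Fintype n] {p xs : n → ℝ}

theorem gohLyapunov_nonneg (hp : ∀ i, 0 ≤ p i) (hxs : ∀ i, 0 < xs i) {x : n → ℝ}
    (hx : ∀ i, 0 < x i) : 0 ≤ gohLyapunov p xs x :=
  mul_nonneg zero_le_two <| Finset.sum_nonneg fun i _ =>
    mul_nonneg (hp i) (Real.sub_sub_mul_log_div_nonneg (hx i) (hxs i))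

theorem gohLyapunov_eq_zero_iff (hp : ∀ i, 0 < p i) (hxs : ∀ i, 0 < xs i) {x : n → ℝ}
    (hx : ∀ i, 0 < x i) : gohLyapunov p xs x = 0 ↔ x = xs := by
  rw [gohLyapunov, mul_eq_zero, or_iff_right two_ne_zero, Finset.sum_eq_zero_iff_of_nonneg
    fun i _ => mul_nonneg (hp i).le (Real.sub_sub_mul_log_div_nonneg (hx i) (hxs i)), funext_iff]
  simp only [Finset.mem_univ, true_implies, mul_eq_zero, (hp _).ne', false_or,
    Real.sub_sub_mul_log_div_eq_zero_iff (hx _) (hxs _)]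

theorem hasDerivAt_gohLyapunov [DecidableEq n] {A : Matrix n n ℝ} {r : n → ℝ}
    (hxs : ∀ i, xs i ≠ 0) (heq : r + A *ᵥ xs = 0) {x : ℝ → n → ℝ} {t : ℝ}
    (hxt : ∀ i, x t i ≠ 0)
    (hx : ∀ i, HasDerivAt (fun s => x s i) (x t i * (r + A *ᵥ x t) i) t) :
    HasDerivAt (fun s => gohLyapunov p xs (x s))
      ((x t - xs) ⬝ᵥ ((Aᵀ * diagonal p + diagonal p * A) *ᵥ (x t - xs))) t := by
  have hgrowth : r + A *ᵥ x t = A *ᵥ (x t - xs) := by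
    rw [mulVec_sub, eq_neg_of_add_eq_zero_left heq, neg_add_eq_sub]
  rw [dotProduct_transpose_mul_diagonal_add_diagonal_mul_mulVec, ← hgrowth]
  refine (HasDerivAt.fun_sum fun i _ => ((hx i).sub_sub_mul_log_div (hxt i) (hxs i)).const_mul
    (p i)).const_mul 2 |>.congr_deriv ?_
  simp only [Pi.sub_apply, mul_assoc]

end GohLyapunov

/-- Goh's Lyapunov function for diagonally stable GLV systems: with positive
diagonal `P = diag p` such that `AᵀP + PA` is negative definite and interior
equilibrium `x*` (`r + A x* = 0`), the function
`V(x) = 2 Σᵢ pᵢ(xᵢ − x*ᵢ − x*ᵢ log(xᵢ/x*ᵢ))` is nonnegative on the positive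
orthant, vanishes exactly at `x*`, its derivative along solutions of
`ẋ = diag(x)(r + Ax)` equals `(x−x*)ᵀ(AᵀP+PA)(x−x*)`, which is negative for `x ≠ x*`. -/
theorem glv_goh_lyapunov {n : ℕ}
    (A : Matrix (Fin n) (Fin n) ℝ) (r : Fin n → ℝ)
    (p : Fin n → ℝ) (hp : ∀ i, 0 < p i)
    (hstab : ∀ v : Fin n → ℝ, v ≠ 0 →
      v ⬝ᵥ ((Aᵀ * Matrix.diagonal p + Matrix.diagonal p * A).mulVec v) < 0)
    (xs : Fin n → ℝ) (hxs : ∀ i, 0 < xs i) (heq : r + A.mulVec xs = 0) :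
    let V : (Fin n → ℝ) → ℝ :=
      fun x => 2 * ∑ i, p i * (x i - xs i - xs i * Real.log (x i / xs i))
    (∀ x : Fin n → ℝ, (∀ i, 0 < x i) → 0 ≤ V x) ∧
    (∀ x : Fin n → ℝ, (∀ i, 0 < x i) → (V x = 0 ↔ x = xs)) ∧
    (∀ (x : ℝ → Fin n → ℝ) (t : ℝ), (∀ s i, 0 < x s i) →
      (∀ i, HasDerivAt (fun s => x s i) (x t i * (r i + ∑ j, A i j * x t j)) t) →
      HasDerivAt (fun s => V (x s))
        ((x t - xs) ⬝ᵥ ((Aᵀ * Matrix.diagonal p + Matrix.diagonal p * A).mulVec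
          (x t - xs))) t) ∧
    (∀ x : Fin n → ℝ, x ≠ xs →
      (x - xs) ⬝ᵥ ((Aᵀ * Matrix.diagonal p + Matrix.diagonal p * A).mulVec (x - xs)) < 0) :=
  ⟨fun _ hx => gohLyapunov_nonneg (fun i => (hp i).le) hxs hx,
    fun _ hx => gohLyapunov_eq_zero_iff hp hxs hx,
    fun _ t hpos hx =>
      hasDerivAt_gohLyapunov (fun i => (hxs i).ne') heq (fun i => (hpos t i).ne') hx,
    fun _ hne => hstab _ (sub_ne_zero.mpr hne)⟩
end

section
/- A matrix A ∈ R^{m×m} partitioned as A = [[A₁₁, A₁₂],[A₂₁, A₂₂]] with A₂₂ < 0 a scalar is diagonally stable if and only if there exists a positive diagonal matrix P ∈ R^{(m-1)×(m-1)} such that both A₁₁ᵀP + PA₁₁ < 0 and (A₁₁ − A₁₂A₂₁/A₂₂)ᵀP + P(A₁₁ − A₁₂A₂₁/A₂₂) < 0. -/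
/-!
Write `Q = diag(p, ρ)`, `m(v) = vᵀ(A₁₁ᵀP + PA₁₁)v`, `α(v) = (Pa₁₂)·v` and `β(v) = a₂₁·v`.
At `(v, t)` the Lyapunov form of the block matrix is `m + 2(α + ρβ)t + 2ρA₂₂t²`, a quadratic in `t`
with negative leading coefficient, so it is negative definite iff `(α + ρβ)² < 2ρA₂₂ m` for all
`v ≠ 0`; the condition on the Schur-type matrix reads `2αβ < A₂₂ m`. Since `4ραβ ≤ (α + ρβ)²`, the
first condition implies the second (and `m < 0`).

Conversely, `N = -(A₁₁ᵀP + PA₁₁)` is positive definite, and in the inner product it defines, `α` and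
`β` are represented by vectors `u` and `w`. Testing the Schur condition at `‖w‖u + ‖u‖w` gives
`⟪u, w⟫ + ‖u‖‖w‖ < -A₂₂`, hence `‖u + ρw‖² = (‖u‖ - ρ‖w‖)² + 2ρ(⟪u, w⟫ + ‖u‖‖w‖) < -2ρA₂₂` for a
suitable `ρ > 0`, and by Cauchy–Schwarz this `ρ` satisfies the block condition.
-/

open Matrix

/-- `M` is diagonally stable if there is a positive diagonal `Q` with
`MᵀQ + QM` negative definite. -/
def DiagStable {ι : Type*} [Fintype ι] [DecidableEq ι] (M : Matrix ι ι ℝ) : Prop :=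
  ∃ q : ι → ℝ, (∀ i, 0 < q i) ∧
    ∀ v : ι → ℝ, v ≠ 0 →
      v ⬝ᵥ ((Mᵀ * Matrix.diagonal q + Matrix.diagonal q * M).mulVec v) < 0

theorem exists_pos_sq_sub_mul_lt_two_mul {a b δ : ℝ} (ha : 0 ≤ a) (hb : 0 ≤ b) (hδ : 0 < δ) :
    ∃ ρ > 0, (a - ρ * b) ^ 2 < 2 * ρ * δ := by
  rcases hb.eq_or_lt with rfl | hb
  · refine ⟨(a ^ 2 + 1) / (2 * δ), by positivity, ?_⟩
    field_simp
    nlinarith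
  · refine ⟨(a * b + δ) / b ^ 2, by positivity, ?_⟩
    have hsub : a - (a * b + δ) / b ^ 2 * b = -(δ / b) := by field_simp; ring
    have hrhs : 2 * ((a * b + δ) / b ^ 2) * δ = 2 * a * δ / b + 2 * (δ / b) ^ 2 := by field_simp
    rw [hsub, hrhs, neg_sq]
    have : 0 ≤ 2 * a * δ / b := by positivity
    nlinarith [div_pos hδ hb]

theorem forall_add_two_mul_add_mul_sq_neg_iff {a g m : ℝ} (ha : a < 0) :
    (∀ t, m + 2 * g * t + a * t ^ 2 < 0) ↔ g ^ 2 < a * m := by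
  constructor
  · intro h
    -- the maximum is attained at `t = -g / a`
    have hat : a * (-g / a) = -g := mul_div_cancel₀ _ ha.ne
    nlinarith [mul_pos_of_neg_of_neg ha (h (-g / a))]
  · intro h t
    nlinarith [sq_nonneg (a * t + g)]

section InnerProduct

open RealInnerProductSpace

variable {E : Type*} [SeminormedAddCommGroup E] [InnerProductSpace ℝ E]

theorem inner_add_norm_mul_norm_lt {u w : E} {c : ℝ} (hc : 0 < c)
    (h : ∀ x ≠ 0, 2 * ⟪u, x⟫ * ⟪w, x⟫ < c * ‖x‖ ^ 2) : ⟪u, w⟫ + ‖u‖ * ‖w‖ < c := by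
  set s := ⟪u, w⟫ + ‖u‖ * ‖w‖
  rcases le_or_gt s 0 with hs | hs
  · linarith
  have huw : 0 < ‖u‖ * ‖w‖ := by
    by_contra! h0
    linarith [real_inner_le_norm u w]
  -- test the hypothesis on the direction where `2 ⟪u, x⟫ ⟪w, x⟫ / ‖x‖ ^ 2` is maximal
  set x := ‖w‖ • u + ‖u‖ • w
  have hux : ⟪u, x⟫ = ‖u‖ * s := by
    simp only [x, s, inner_add_right, real_inner_smul_right, real_inner_self_eq_norm_sq]
    ring
  have hwx : ⟪w, x⟫ = ‖w‖ * s := by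
    simp only [x, s, inner_add_right, real_inner_smul_right, real_inner_self_eq_norm_sq,
      real_inner_comm u w]
    ring
  have hxx : ‖x‖ ^ 2 = 2 * (‖u‖ * ‖w‖) * s := by
    simp only [x, s, norm_add_sq_real, norm_smul, real_inner_smul_left, real_inner_smul_right,
      Real.norm_eq_abs, abs_norm]
    ring
  have hx : x ≠ 0 := by
    rintro hx
    rw [hx, norm_zero] at hxx
    nlinarith [mul_pos huw hs]
  have := h x hx
  rw [hux, hwx, hxx] at this
  nlinarith [mul_pos huw hs]

theorem exists_pos_norm_add_smul_sq_lt {u w : E} {c : ℝ} (hc : 0 < c)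
    (h : ∀ x ≠ 0, 2 * ⟪u, x⟫ * ⟪w, x⟫ < c * ‖x‖ ^ 2) :
    ∃ ρ > 0, ‖u + ρ • w‖ ^ 2 < 2 * ρ * c := by
  obtain ⟨ρ, hρ, hlt⟩ := exists_pos_sq_sub_mul_lt_two_mul (norm_nonneg u) (norm_nonneg w)
    (sub_pos.2 (inner_add_norm_mul_norm_lt hc h))
  refine ⟨ρ, hρ, ?_⟩
  rw [norm_add_sq_real, norm_smul, real_inner_smul_right, Real.norm_eq_abs, abs_of_pos hρ]
  nlinarith

end InnerProduct

namespace Matrix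

variable {ι : Type*} [Fintype ι]

theorem mul_dotProduct_right_comm (q x b : ι → ℝ) : (q * x) ⬝ᵥ b = (q * b) ⬝ᵥ x := by
  simp only [dotProduct, Pi.mul_apply, mul_right_comm]

variable [DecidableEq ι]

theorem PosDef.exists_pos_sq_dotProduct_add_mul_lt {N : Matrix ι ι ℝ} (hN : N.PosDef)
    (b d : ι → ℝ) {c : ℝ} (hc : 0 < c)
    (h : ∀ v ≠ 0, 2 * (b ⬝ᵥ v) * (d ⬝ᵥ v) < c * (v ⬝ᵥ N *ᵥ v)) :
    ∃ ρ > 0, ∀ v ≠ 0, (b ⬝ᵥ v + ρ * (d ⬝ᵥ v)) ^ 2 < 2 * ρ * c * (v ⬝ᵥ N *ᵥ v) := by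
  let := N.toSeminormedAddCommGroup hN.posSemidef
  let := N.toInnerProductSpace hN.posSemidef
  have hinner (x y : ι → ℝ) : inner ℝ x y = x ⬝ᵥ N *ᵥ y := dotProduct_comm _ _
  have hrep (a x : ι → ℝ) : inner ℝ (N⁻¹ *ᵥ a) x = a ⬝ᵥ x := by
    have hsymm : Nᵀ = N := hN.isHermitian
    rw [hinner, dotProduct_mulVec, ← mulVec_transpose, hsymm, mulVec_mulVec,
      mul_nonsing_inv N ((isUnit_iff_isUnit_det N).mp hN.isUnit), one_mulVec]
  obtain ⟨ρ, hρ, hlt⟩ := exists_pos_norm_add_smul_sq_lt (u := N⁻¹ *ᵥ b) (w := N⁻¹ *ᵥ d) hc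
    fun x hx => by rw [← real_inner_self_eq_norm_sq, hrep, hrep, hinner]; exact h x hx
  rw [← real_inner_self_eq_norm_sq] at hlt
  refine ⟨ρ, hρ, fun v hv => ?_⟩
  calc (b ⬝ᵥ v + ρ * (d ⬝ᵥ v)) ^ 2
      = inner ℝ (N⁻¹ *ᵥ b + ρ • N⁻¹ *ᵥ d) v * inner ℝ (N⁻¹ *ᵥ b + ρ • N⁻¹ *ᵥ d) v := by
        rw [inner_add_left, real_inner_smul_left, hrep, hrep, sq]
    _ ≤ inner ℝ (N⁻¹ *ᵥ b + ρ • N⁻¹ *ᵥ d) (N⁻¹ *ᵥ b + ρ • N⁻¹ *ᵥ d) * inner ℝ v v :=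
        real_inner_mul_inner_self_le _ _
    _ < 2 * ρ * c * (v ⬝ᵥ N *ᵥ v) := by
        rw [hinner v v]
        gcongr
        exact hN.dotProduct_mulVec_pos hv

def lyapunovMatrix (M : Matrix ι ι ℝ) (q : ι → ℝ) : Matrix ι ι ℝ :=
  Mᵀ * diagonal q + diagonal q * M

theorem dotProduct_lyapunovMatrix_mulVec (M : Matrix ι ι ℝ) (q x : ι → ℝ) :
    x ⬝ᵥ (lyapunovMatrix M q *ᵥ x) = 2 * ((q * x) ⬝ᵥ (M *ᵥ x)) := by
  rw [lyapunovMatrix, add_mulVec, dotProduct_add, ← mulVec_mulVec, ← mulVec_mulVec,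
    dotProduct_mulVec, vecMul_transpose, dotProduct_comm, dotProduct_mulVec x, ← mulVec_transpose,
    diagonal_transpose, two_mul, show diagonal q *ᵥ x = q * x from funext (mulVec_diagonal q x)]

theorem posDef_neg_lyapunovMatrix {M : Matrix ι ι ℝ} {q : ι → ℝ}
    (h : ∀ x ≠ 0, x ⬝ᵥ (lyapunovMatrix M q *ᵥ x) < 0) : (-lyapunovMatrix M q).PosDef := by
  refine .of_dotProduct_mulVec_pos ?_ fun x hx => ?_
  · rw [isHermitian_iff_isSymm, IsSymm, transpose_neg, lyapunovMatrix, transpose_add,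
      transpose_mul, transpose_mul, transpose_transpose, diagonal_transpose, add_comm]
  · rw [star_trivial, neg_mulVec, dotProduct_neg, neg_pos]
    exact h x hx

theorem dotProduct_lyapunovMatrix_sub_smul_vecMulVec_mulVec (A : Matrix ι ι ℝ) (b d q x : ι → ℝ)
    (s : ℝ) : x ⬝ᵥ (lyapunovMatrix (A - s • vecMulVec b d) q *ᵥ x) =
      x ⬝ᵥ (lyapunovMatrix A q *ᵥ x) - 2 * s * ((q * b) ⬝ᵥ x) * (d ⬝ᵥ x) := by
  simp only [dotProduct_lyapunovMatrix_mulVec, sub_mulVec, smul_mulVec, vecMulVec_mulVec,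
    dotProduct_sub, dotProduct_smul, op_smul_eq_mul, smul_eq_mul, mul_dotProduct_right_comm q x b]
  ring

theorem dotProduct_lyapunovMatrix_sub_inv_smul_vecMulVec_mulVec_neg_iff (A : Matrix ι ι ℝ)
    (b d q x : ι → ℝ) {a : ℝ} (ha : a < 0) :
    x ⬝ᵥ (lyapunovMatrix (A - a⁻¹ • vecMulVec b d) q *ᵥ x) < 0 ↔
      2 * ((q * b) ⬝ᵥ x) * (d ⬝ᵥ x) < a * (x ⬝ᵥ (lyapunovMatrix A q *ᵥ x)) := by
  rw [dotProduct_lyapunovMatrix_sub_smul_vecMulVec_mulVec, sub_neg, ← lt_div_iff_of_neg' ha]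
  ring_nf

-- `replicateCol Unit b`, `replicateRow Unit d` and `of fun _ _ => a` unfold to the bare functions
-- `fun i _ => b i`, `fun _ j => d j` and `fun _ _ => a` in which the main theorem writes the blocks.
theorem dotProduct_lyapunovMatrix_fromBlocks_mulVec (A : Matrix ι ι ℝ) (b d p v : ι → ℝ)
    (a ρ t : ℝ) :
    Sum.elim v (fun _ => t) ⬝ᵥ
      (lyapunovMatrix (fromBlocks A (replicateCol Unit b) (replicateRow Unit d) (of fun _ _ => a))
        (Sum.elim p fun _ => ρ) *ᵥ Sum.elim v fun _ => t) =
      v ⬝ᵥ (lyapunovMatrix A p *ᵥ v) + 2 * ((p * b) ⬝ᵥ v + ρ * (d ⬝ᵥ v)) * t +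
        2 * ρ * a * t ^ 2 := by
  rw [dotProduct_lyapunovMatrix_mulVec, dotProduct_lyapunovMatrix_mulVec, fromBlocks_mulVec,
    Sum.elim_comp_inl, Sum.elim_comp_inr, ← Sum.elim_mul_mul, sumElim_dotProduct_sumElim]
  have hcol : replicateCol Unit b *ᵥ (fun _ => t) = t • b := by
    ext i; simp [mulVec, dotProduct, mul_comm]
  have hrow : replicateRow Unit d *ᵥ v = fun _ => d ⬝ᵥ v := by
    ext; simp [mulVec, dotProduct]
  have hcorner : (of fun _ _ => a : Matrix Unit Unit ℝ) *ᵥ (fun _ => t) = fun _ => a * t := by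
    ext; simp [mulVec, dotProduct]
  rw [hcol, hrow, hcorner, dotProduct_add, dotProduct_smul, mul_dotProduct_right_comm p v b]
  simp only [dotProduct, Pi.mul_apply, smul_eq_mul, Finset.univ_unique, PUnit.default_eq_unit,
    Pi.add_apply, Finset.sum_const, Finset.card_singleton, one_smul]
  ring

theorem negDef_lyapunovMatrix_fromBlocks_iff (A : Matrix ι ι ℝ) (b d p : ι → ℝ) {a ρ : ℝ}
    (ha : a < 0) (hρ : 0 < ρ) :
    (∀ x ≠ 0, x ⬝ᵥ (lyapunovMatrix
        (fromBlocks A (replicateCol Unit b) (replicateRow Unit d) (of fun _ _ => a))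
        (Sum.elim p fun _ => ρ) *ᵥ x) < 0) ↔
      ∀ v ≠ 0, ((p * b) ⬝ᵥ v + ρ * (d ⬝ᵥ v)) ^ 2 <
        2 * ρ * a * (v ⬝ᵥ (lyapunovMatrix A p *ᵥ v)) := by
  have hρa : 2 * ρ * a < 0 := by nlinarith
  constructor
  · intro h v hv
    refine (forall_add_two_mul_add_mul_sq_neg_iff hρa).mp fun t => ?_
    rw [← dotProduct_lyapunovMatrix_fromBlocks_mulVec]
    exact h _ fun h0 => hv (funext fun i => congrFun h0 (Sum.inl i))
  · intro h x hx
    obtain ⟨v, t, rfl⟩ : ∃ v t, x = Sum.elim v fun _ => t :=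
      ⟨x ∘ Sum.inl, x (Sum.inr ()), by ext (i | ⟨⟩) <;> rfl⟩
    rw [dotProduct_lyapunovMatrix_fromBlocks_mulVec]
    rcases eq_or_ne v 0 with rfl | hv
    · have ht : t ≠ 0 := fun ht => hx (by ext (i | ⟨⟩) <;> simp [ht])
      simp only [zero_dotProduct, dotProduct_zero, mul_zero, add_zero, zero_mul, zero_add]
      exact mul_neg_of_neg_of_pos hρa (sq_pos_of_ne_zero ht)
    · exact (forall_add_two_mul_add_mul_sq_neg_iff hρa).mpr (h v hv) t

end Matrix

/-- Shorten–Narendra: a matrix `[[A₁₁, A₁₂],[A₂₁, A₂₂]]` with scalar `A₂₂ < 0` is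
diagonally stable iff `A₁₁` and the Schur-type matrix `A₁₁ − A₁₂A₂₁/A₂₂` have a
common diagonal Lyapunov function. -/
theorem diagStable_iff_common_diagonal_lyapunov {n : ℕ}
    (A11 : Matrix (Fin n) (Fin n) ℝ) (a12 a21 : Fin n → ℝ) (a22 : ℝ) (h22 : a22 < 0) :
    DiagStable (Matrix.fromBlocks A11 (fun i _ => a12 i) (fun _ j => a21 j)
        (fun _ _ : Unit => a22)) ↔
      ∃ p : Fin n → ℝ, (∀ i, 0 < p i) ∧
        (∀ v : Fin n → ℝ, v ≠ 0 →
          v ⬝ᵥ ((A11ᵀ * Matrix.diagonal p + Matrix.diagonal p * A11).mulVec v) < 0) ∧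
        (∀ v : Fin n → ℝ, v ≠ 0 →
          v ⬝ᵥ (((A11 - a22⁻¹ • Matrix.vecMulVec a12 a21)ᵀ * Matrix.diagonal p +
            Matrix.diagonal p *
              (A11 - a22⁻¹ • Matrix.vecMulVec a12 a21)).mulVec v) < 0) := by
  constructor
  · rintro ⟨q, hq, hM⟩
    obtain ⟨p, ρ, rfl⟩ : ∃ p ρ, q = Sum.elim p fun _ => ρ :=
      ⟨q ∘ Sum.inl, q (Sum.inr ()), by ext (i | ⟨⟩) <;> rfl⟩
    have hρ : 0 < ρ := hq (Sum.inr ())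
    have hρa : ρ * a22 < 0 := mul_neg_of_pos_of_neg hρ h22
    have hblock := (negDef_lyapunovMatrix_fromBlocks_iff A11 a12 a21 p h22 hρ).mp hM
    refine ⟨p, fun i => hq (Sum.inl i), fun v hv => ?_, fun v hv => ?_⟩
    · change v ⬝ᵥ (lyapunovMatrix A11 p *ᵥ v) < 0
      nlinarith [hblock v hv, sq_nonneg ((p * a12) ⬝ᵥ v + ρ * (a21 ⬝ᵥ v))]
    · refine (dotProduct_lyapunovMatrix_sub_inv_smul_vecMulVec_mulVec_neg_iff _ _ _ _ _ h22).mpr ?_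
      nlinarith [hblock v hv, sq_nonneg ((p * a12) ⬝ᵥ v - ρ * (a21 ⬝ᵥ v))]
  · rintro ⟨p, hp, hA, hS⟩
    obtain ⟨ρ, hρ, hlt⟩ := (posDef_neg_lyapunovMatrix hA).exists_pos_sq_dotProduct_add_mul_lt
      (p * a12) a21 (neg_pos.2 h22) fun v hv => by
        rw [neg_mulVec, dotProduct_neg, neg_mul_neg]
        exact (dotProduct_lyapunovMatrix_sub_inv_smul_vecMulVec_mulVec_neg_iff _ _ _ _ _ h22).mp
          (hS v hv)
    refine ⟨Sum.elim p fun _ => ρ, ?_,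
      (negDef_lyapunovMatrix_fromBlocks_iff A11 a12 a21 p h22 hρ).mpr fun v hv => ?_⟩
    · rintro (i | ⟨⟩)
      exacts [hp i, hρ]
    · have := hlt v hv
      rw [neg_mulVec, dotProduct_neg] at this
      linarith
end

section
/- If A ∈ Rⁿˣⁿ is diagonally stable with positive diagonal P satisfying AᵀP + PA ≤ −εI for some ε > 0, then for any b, c ∈ Rⁿ and any d < 0 with |d| > 2 λ_max(P) ‖b cᵀ‖ / ε, the matrix A − (1/d) b cᵀ satisfies (A − bcᵀ/d)ᵀP + P(A − bcᵀ/d) < 0; in particular A and A − bcᵀ/d share a common diagonal Lyapunov function. -/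
/-!
Because `P` is symmetric, `vᵀ(MᵀP + PM)v = 2 ⟪Pv, Mv⟫`, which is linear in `M`. Replacing `A` by
`A - s • B` therefore moves the quadratic form by `-2s ⟪Pv, Bv⟫`, and Cauchy–Schwarz bounds this by
`2|s| ‖P‖ ‖B‖ ‖v‖²`, where `‖P‖ = maxᵢ pᵢ` for a positive diagonal `P`. For `s = 1/d` the size
condition on `d` makes this smaller than the margin `ε ‖v‖²` given by the stability of `A`.
-/

open Matrix
open scoped Matrix.Norms.L2Operator

namespace Matrix

variable {n : Type*} [Fintype n]

theorem abs_dotProduct_le_norm_toLp_mul_norm_toLp (x y : n → ℝ) :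
    |x ⬝ᵥ y| ≤ ‖WithLp.toLp 2 x‖ * ‖WithLp.toLp 2 y‖ := by
  simpa [EuclideanSpace.inner_toLp_toLp, dotProduct_comm] using
    abs_real_inner_le_norm (WithLp.toLp 2 x : EuclideanSpace ℝ n) (WithLp.toLp 2 y)

theorem dotProduct_transpose_mul_add_mul_mulVec {R : Type*} [CommRing R] {P : Matrix n n R}
    (hP : Pᵀ = P) (M : Matrix n n R) (v : n → R) :
    v ⬝ᵥ ((Mᵀ * P + P * M) *ᵥ v) = 2 * (P *ᵥ v ⬝ᵥ M *ᵥ v) := by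
  rw [add_mulVec, ← mulVec_mulVec, ← mulVec_mulVec, dotProduct_add,
    dotProduct_transpose_mulVec, ← hP, dotProduct_transpose_mulVec, hP, dotProduct_comm (M *ᵥ v)]
  ring

variable [DecidableEq n]

theorem abs_mulVec_dotProduct_mulVec_le (P B : Matrix n n ℝ) (v : n → ℝ) :
    |P *ᵥ v ⬝ᵥ B *ᵥ v| ≤ ‖P‖ * ‖B‖ * ‖WithLp.toLp 2 v‖ ^ 2 := by
  calc |P *ᵥ v ⬝ᵥ B *ᵥ v| ≤ ‖WithLp.toLp 2 (P *ᵥ v)‖ * ‖WithLp.toLp 2 (B *ᵥ v)‖ :=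
        abs_dotProduct_le_norm_toLp_mul_norm_toLp _ _
    _ ≤ (‖P‖ * ‖WithLp.toLp 2 v‖) * (‖B‖ * ‖WithLp.toLp 2 v‖) := by
        gcongr
        · exact l2_opNorm_mulVec P (WithLp.toLp 2 v)
        · exact l2_opNorm_mulVec B (WithLp.toLp 2 v)
    _ = ‖P‖ * ‖B‖ * ‖WithLp.toLp 2 v‖ ^ 2 := by ring

theorem dotProduct_lyapunov_sub_smul_mulVec_neg {P M B : Matrix n n ℝ} (hP : Pᵀ = P) {ε s : ℝ}
    (hM : ∀ v : n → ℝ, v ⬝ᵥ ((Mᵀ * P + P * M) *ᵥ v) ≤ -ε * ∑ i, v i ^ 2)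
    (hs : 2 * |s| * ‖P‖ * ‖B‖ < ε) {v : n → ℝ} (hv : v ≠ 0) :
    v ⬝ᵥ (((M - s • B)ᵀ * P + P * (M - s • B)) *ᵥ v) < 0 := by
  have hMv := hM v
  rw [← EuclideanSpace.real_norm_sq_eq, dotProduct_transpose_mul_add_mul_mulVec hP] at hMv
  have hv_pos : 0 < ‖WithLp.toLp 2 v‖ ^ 2 := by
    simpa [sq_pos_iff, norm_ne_zero_iff] using hv
  have hcross : |s * (P *ᵥ v ⬝ᵥ B *ᵥ v)| ≤ |s| * (‖P‖ * ‖B‖ * ‖WithLp.toLp 2 v‖ ^ 2) := by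
    rw [abs_mul]
    exact mul_le_mul_of_nonneg_left (abs_mulVec_dotProduct_mulVec_le P B v) (abs_nonneg s)
  have hsmall : 2 * |s| * ‖P‖ * ‖B‖ * ‖WithLp.toLp 2 v‖ ^ 2 < ε * ‖WithLp.toLp 2 v‖ ^ 2 :=
    mul_lt_mul_of_pos_right hs hv_pos
  rw [dotProduct_transpose_mul_add_mul_mulVec hP, sub_mulVec, smul_mulVec, dotProduct_sub,
    dotProduct_smul, smul_eq_mul]
  linarith [neg_abs_le (s * (P *ᵥ v ⬝ᵥ B *ᵥ v))]

end Matrix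

theorem rank_one_perturbation_common_diagonal_lyapunov_general {n : ℕ} [NeZero n]
    (A : Matrix (Fin n) (Fin n) ℝ)
    (p : Fin n → ℝ) (hp : ∀ i, 0 < p i) (ε : ℝ) (hε : 0 < ε)
    (hstab : ∀ v : Fin n → ℝ,
      v ⬝ᵥ ((Aᵀ * Matrix.diagonal p + Matrix.diagonal p * A).mulVec v) ≤
        -ε * ∑ i, (v i) ^ 2)
    (b c : Fin n → ℝ) (d : ℝ)
    (hdbig : |d| > 2 * (Finset.univ.sup' Finset.univ_nonempty p) *
        ‖Matrix.toEuclideanCLM (𝕜 := ℝ) (Matrix.vecMulVec b c)‖ / ε) :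
    ∀ v : Fin n → ℝ, v ≠ 0 →
      v ⬝ᵥ (((A - d⁻¹ • Matrix.vecMulVec b c)ᵀ * Matrix.diagonal p +
        Matrix.diagonal p * (A - d⁻¹ • Matrix.vecMulVec b c)).mulVec v) < 0 := by
  intro v hv
  set pmax := Finset.univ.sup' Finset.univ_nonempty p
  set B := Matrix.vecMulVec b c
  have hp_le (i : Fin n) : p i ≤ pmax := Finset.le_sup' p (Finset.mem_univ i)
  have hp_norm : ‖p‖ ≤ pmax := (pi_norm_le_iff_of_nonneg ((hp 0).le.trans (hp_le 0))).mpr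
    fun i => (abs_of_pos (hp i)).trans_le (hp_le i)
  rw [gt_iff_lt, div_lt_iff₀ hε, l2_opNorm_toEuclideanCLM] at hdbig
  have hd : 0 < |d| := by
    have : 0 ≤ 2 * pmax * ‖B‖ := by
      have := (norm_nonneg p).trans hp_norm
      positivity
    nlinarith
  refine dotProduct_lyapunov_sub_smul_mulVec_neg (diagonal_transpose p) hstab ?_ hv
  calc 2 * |d⁻¹| * ‖diagonal p‖ * ‖B‖ = 2 * ‖p‖ * ‖B‖ / |d| := by
        rw [abs_inv, l2_opNorm_diagonal]; ring
    _ ≤ 2 * pmax * ‖B‖ / |d| := by gcongr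
    _ < ε := by rwa [div_lt_iff₀ hd, mul_comm ε]

/-- If `AᵀP + PA ≤ -εI` for a positive diagonal `P` and `ε > 0`, then for any
`b, c` and any `d < 0` with `|d| > 2 λ_max(P) ‖bcᵀ‖ / ε`, the matrix
`A − bcᵀ/d` satisfies `(A − bcᵀ/d)ᵀP + P(A − bcᵀ/d) < 0`; in particular `A` and
`A − bcᵀ/d` share the common diagonal Lyapunov function `P`. -/
theorem rank_one_perturbation_common_diagonal_lyapunov {n : ℕ} [NeZero n]
    (A : Matrix (Fin n) (Fin n) ℝ)
    (p : Fin n → ℝ) (hp : ∀ i, 0 < p i) (ε : ℝ) (hε : 0 < ε)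
    (hstab : ∀ v : Fin n → ℝ,
      v ⬝ᵥ ((Aᵀ * Matrix.diagonal p + Matrix.diagonal p * A).mulVec v) ≤
        -ε * ∑ i, (v i) ^ 2)
    (b c : Fin n → ℝ) (d : ℝ) (hd : d < 0)
    (hdbig : |d| > 2 * (Finset.univ.sup' Finset.univ_nonempty p) *
        ‖Matrix.toEuclideanCLM (𝕜 := ℝ) (Matrix.vecMulVec b c)‖ / ε) :
    ∀ v : Fin n → ℝ, v ≠ 0 →
      v ⬝ᵥ (((A - d⁻¹ • Matrix.vecMulVec b c)ᵀ * Matrix.diagonal p +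
        Matrix.diagonal p * (A - d⁻¹ • Matrix.vecMulVec b c)).mulVec v) < 0 :=
  rank_one_perturbation_common_diagonal_lyapunov_general A p hp ε hε hstab b c d hdbig
end

section
/- If A ∈ Rⁿˣⁿ is diagonally stable, then every principal submatrix of A (obtained by deleting the rows and columns indexed by any proper subset L ⊂ {1,…,n}) is also diagonally stable. -/
open Matrix

/-- Every principal submatrix of a diagonally stable matrix is diagonally stable. -/
theorem diagStable_principal_submatrix {n : ℕ}
    (A : Matrix (Fin n) (Fin n) ℝ) (h : DiagStable A)
    {m : ℕ} (f : Fin m → Fin n) (hf : Function.Injective f) :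
    DiagStable (A.submatrix f f) := by
  obtain ⟨q, hq, hneg⟩ := h
  refine ⟨q ∘ f, fun i => hq (f i), fun v hv => ?_⟩
  set w : Fin n → ℝ := Function.extend f v 0 with hw
  have hwf : ∀ j, w (f j) = v j := fun j => hf.extend_apply v 0 j
  have hw0 : ∀ i, (¬ ∃ j, f j = i) → w i = 0 := fun i hi => by
    simp [hw, Function.extend_apply' _ _ _ hi]
  have hwne : w ≠ 0 := by
    intro h0
    apply hv
    funext j
    have := congrFun h0 (f j)
    simpa [hwf j] using this
  have hsum : ∀ (g : Fin n → ℝ), (∀ i, (¬ ∃ j, f j = i) → g i = 0) →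
      ∑ i, g i = ∑ j, g (f j) := by
    intro g hg
    rw [← Finset.sum_image (fun a _ b _ hab => hf hab) (g := f) (s := Finset.univ) (f := g)]
    refine (Finset.sum_subset (Finset.subset_univ _) ?_).symm
    intro i _ hi
    refine hg i ?_
    simpa [Finset.mem_image] using hi
  have key : v ⬝ᵥ (((A.submatrix f f)ᵀ * Matrix.diagonal (q ∘ f) +
        Matrix.diagonal (q ∘ f) * (A.submatrix f f)).mulVec v)
      = w ⬝ᵥ ((Aᵀ * Matrix.diagonal q + Matrix.diagonal q * A).mulVec w) := by
    simp only [dotProduct, mulVec, Matrix.add_apply, Matrix.mul_diagonal,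
      Matrix.diagonal_mul, Matrix.transpose_apply, Matrix.submatrix_apply,
      Function.comp, Finset.mul_sum]
    rw [hsum (fun i => ∑ k, w i * ((A k i * q k + q i * A i k) * w k))
      (fun i hi => by simp [hw0 i hi])]
    refine Finset.sum_congr rfl fun j _ => ?_
    rw [hsum (fun k => w (f j) * ((A k (f j) * q k + q (f j) * A (f j) k) * w k))
      (fun k hk => by simp [hw0 k hk])]
    refine Finset.sum_congr rfl fun l _ => ?_
    simp [hwf]
  rw [key]
  exact hneg w hwne
end

section
/- If A ∈ Rⁿˣⁿ is diagonally stable, witnessed by positive diagonal P with AᵀP + PA < 0, then for any B, C ∈ R^{n×p} and any positive diagonal P₂ ∈ R^{p×p}, there exists D ∈ R^{p×p} such that the block matrix F = [[A, B],[Cᵀ, D]] is diagonally stable with diagonal Lyapunov matrix diag(P, P₂); a sufficient condition is DᵀP₂ + P₂D − (BᵀP + P₂Cᵀ) Ã⁻¹ (CP₂ + PB) < 0 where Ã := AᵀP + PA. -/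
/-!
With `Q = diag(P, P₂)`, the matrix `FᵀQ + QF` is the symmetric block matrix
`[[Ã, E], [Eᵀ, DᵀP₂ + P₂D]]` with `E = CP₂ + PB`. As `Ã` is negative definite, this block matrix
is negative definite as soon as its Schur complement `DᵀP₂ + P₂D - EᵀÃ⁻¹E` is, which is the
sufficient condition. For existence take `D = ½ P₂⁻¹ (EᵀÃ⁻¹E - P₂)`, which turns the Schur
complement into `-P₂`.
-/
open Matrix

namespace Matrix

variable {m n R : Type*} [Fintype m] [Fintype n]

section TrivialStar

variable [CommRing R] [StarRing R] [TrivialStar R]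

theorem isHermitian_transpose_mul_add_mul {Q : Matrix n n R} (hQ : Q.IsHermitian)
    (F : Matrix n n R) : (Fᵀ * Q + Q * F).IsHermitian := by
  rw [IsHermitian, conjTranspose_eq_transpose_of_trivial] at hQ ⊢
  rw [transpose_add, transpose_mul, transpose_mul, transpose_transpose, hQ, add_comm]

theorem posDef_neg_iff_dotProduct_mulVec [PartialOrder R] [IsOrderedAddMonoid R] {M : Matrix n n R}
    (hM : M.IsHermitian) : (-M).PosDef ↔ ∀ v : n → R, v ≠ 0 → v ⬝ᵥ M *ᵥ v < 0 := by
  rw [posDef_iff_dotProduct_mulVec, and_iff_right hM.neg]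
  simp [neg_mulVec, dotProduct_neg]

end TrivialStar

variable [DecidableEq m]

section SchurComplement

variable [CommRing R] [PartialOrder R] [StarRing R] [StarOrderedRing R]

theorem PosDef.fromBlocks₁₁_of_schur {A : Matrix m m R} (B : Matrix m n R) (D : Matrix n n R)
    (hA : A.PosDef) [Invertible A] (hS : (D - Bᴴ * A⁻¹ * B).PosDef) :
    (fromBlocks A B Bᴴ D).PosDef := by
  have hA' := posDef_iff_dotProduct_mulVec.1 hA
  have hS' := posDef_iff_dotProduct_mulVec.1 hS
  refine posDef_iff_dotProduct_mulVec.2 ⟨(hA.1.fromBlocks₁₁ B D).2 hS.1, fun v hv => ?_⟩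
  rw [dotProduct_mulVec, ← Sum.elim_comp_inl_inr v, schur_complement_eq₁₁ B D _ _ hA.1,
    ← dotProduct_mulVec, ← dotProduct_mulVec]
  obtain hy | hy := eq_or_ne (v ∘ Sum.inr) 0
  · have hx : v ∘ Sum.inl ≠ 0 := fun hx =>
      hv (by rw [← Sum.elim_comp_inl_inr v, hx, hy, Sum.elim_zero_zero])
    simpa [hy] using hA'.2 hx
  · exact add_pos_of_nonneg_of_pos
      ((posSemidef_iff_dotProduct_mulVec.1 hA.posSemidef).2 _) (hS'.2 hy)

theorem PosDef.neg_fromBlocks₁₁_of_schur {A : Matrix m m R} (B : Matrix m n R) (D : Matrix n n R)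
    (hA : (-A).PosDef) [Invertible A] (hS : (-(D - Bᴴ * A⁻¹ * B)).PosDef) :
    (-fromBlocks A B Bᴴ D).PosDef := by
  let := invertibleNeg A
  have hinv : (-A)⁻¹ = -A⁻¹ := by
    rw [← invOf_eq_nonsing_inv, ← invOf_eq_nonsing_inv, invOf_neg]
  rw [fromBlocks_neg, ← conjTranspose_neg]
  refine hA.fromBlocks₁₁_of_schur (-B) (-D) ?_
  convert hS using 1
  rw [hinv, conjTranspose_neg]
  simp only [Matrix.neg_mul, Matrix.mul_neg, neg_neg]
  abel

end SchurComplement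

variable [DecidableEq n]

theorem fromBlocks_transpose_mul_diagonal_add_diagonal_mul [CommSemiring R]
    (A : Matrix m m R) (B C : Matrix m n R) (D : Matrix n n R) (d₁ : m → R) (d₂ : n → R) :
    (fromBlocks A B Cᵀ D)ᵀ * diagonal (Sum.elim d₁ d₂) +
        diagonal (Sum.elim d₁ d₂) * fromBlocks A B Cᵀ D =
      fromBlocks (Aᵀ * diagonal d₁ + diagonal d₁ * A) (C * diagonal d₂ + diagonal d₁ * B)
        (Bᵀ * diagonal d₁ + diagonal d₂ * Cᵀ) (Dᵀ * diagonal d₂ + diagonal d₂ * D) := by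
  rw [← fromBlocks_diagonal, fromBlocks_transpose, fromBlocks_multiply, fromBlocks_multiply,
    fromBlocks_add, transpose_transpose]
  simp

theorem transpose_mul_add_mul_half_inv_mul {K : Type*} [Field K] [NeZero (2 : K)]
    {Q S : Matrix n n K} (hQ : Q.IsSymm) (hS : S.IsSymm) [Invertible Q] :
    ((2⁻¹ : K) • (Q⁻¹ * S))ᵀ * Q + Q * ((2⁻¹ : K) • (Q⁻¹ * S)) = S := by
  rw [transpose_smul, transpose_mul, hS.eq, transpose_nonsing_inv, hQ.eq, Matrix.smul_mul,
    Matrix.mul_smul, Matrix.mul_assoc, inv_mul_of_invertible, Matrix.mul_one,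
    mul_inv_cancel_left_of_invertible, ← add_smul, ← two_mul, mul_inv_cancel₀ two_ne_zero,
    one_smul]

end Matrix

theorem block_extension_diagStable_general {n p : ℕ}
    (A : Matrix (Fin n) (Fin n) ℝ)
    (p1 : Fin n → ℝ)
    (hstab : ∀ v : Fin n → ℝ, v ≠ 0 →
      v ⬝ᵥ ((Aᵀ * Matrix.diagonal p1 + Matrix.diagonal p1 * A).mulVec v) < 0)
    (B C : Matrix (Fin n) (Fin p) ℝ)
    (p2 : Fin p → ℝ) (hp2 : ∀ i, 0 < p2 i) :
    (∃ D : Matrix (Fin p) (Fin p) ℝ,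
      ∀ v : Fin n ⊕ Fin p → ℝ, v ≠ 0 →
        v ⬝ᵥ (((Matrix.fromBlocks A B Cᵀ D)ᵀ * Matrix.diagonal (Sum.elim p1 p2) +
          Matrix.diagonal (Sum.elim p1 p2) * Matrix.fromBlocks A B Cᵀ D).mulVec v) < 0) ∧
    (∀ D : Matrix (Fin p) (Fin p) ℝ,
      (∀ w : Fin p → ℝ, w ≠ 0 →
        w ⬝ᵥ ((Dᵀ * Matrix.diagonal p2 + Matrix.diagonal p2 * D -
          (Bᵀ * Matrix.diagonal p1 + Matrix.diagonal p2 * Cᵀ) *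
            (Aᵀ * Matrix.diagonal p1 + Matrix.diagonal p1 * A)⁻¹ *
          (C * Matrix.diagonal p2 + Matrix.diagonal p1 * B)).mulVec w) < 0) →
      ∀ v : Fin n ⊕ Fin p → ℝ, v ≠ 0 →
        v ⬝ᵥ (((Matrix.fromBlocks A B Cᵀ D)ᵀ * Matrix.diagonal (Sum.elim p1 p2) +
          Matrix.diagonal (Sum.elim p1 p2) * Matrix.fromBlocks A B Cᵀ D).mulVec v) < 0) := by
  set P₁ := diagonal p1
  set P₂ := diagonal p2
  set Ã := Aᵀ * P₁ + P₁ * A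
  set E := C * P₂ + P₁ * B
  have hP₁ : P₁.IsHermitian := isHermitian_diagonal p1
  have hP₂ : P₂.IsHermitian := isHermitian_diagonal p2
  have hÃ : (-Ã).PosDef :=
    (posDef_neg_iff_dotProduct_mulVec (isHermitian_transpose_mul_add_mul hP₁ A)).2 hstab
  let : Invertible Ã := ((IsUnit.neg_iff Ã).1 hÃ.isUnit).invertible
  have hE : Eᴴ = Bᵀ * P₁ + P₂ * Cᵀ := by
    rw [conjTranspose_eq_transpose_of_trivial, transpose_add, transpose_mul, transpose_mul,
      diagonal_transpose, diagonal_transpose, add_comm]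
  have hN : (Eᴴ * Ã⁻¹ * E).IsHermitian :=
    isHermitian_conjTranspose_mul_mul E (isHermitian_transpose_mul_add_mul hP₁ A).inv
  have hS (D : Matrix (Fin p) (Fin p) ℝ) : (Dᵀ * P₂ + P₂ * D - Eᴴ * Ã⁻¹ * E).IsHermitian :=
    (isHermitian_transpose_mul_add_mul hP₂ D).sub hN
  have hF (D : Matrix (Fin p) (Fin p) ℝ) :=
    isHermitian_transpose_mul_add_mul (isHermitian_diagonal (Sum.elim p1 p2)) (fromBlocks A B Cᵀ D)
  have sufficient (D : Matrix (Fin p) (Fin p) ℝ)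
      (hD : (-(Dᵀ * P₂ + P₂ * D - Eᴴ * Ã⁻¹ * E)).PosDef) :
      (-((fromBlocks A B Cᵀ D)ᵀ * diagonal (Sum.elim p1 p2) +
        diagonal (Sum.elim p1 p2) * fromBlocks A B Cᵀ D)).PosDef := by
    rw [fromBlocks_transpose_mul_diagonal_add_diagonal_mul, ← hE]
    exact hÃ.neg_fromBlocks₁₁_of_schur E _ hD
  let : Invertible P₂ := (PosDef.diagonal hp2).isUnit.invertible
  set D₀ := (2⁻¹ : ℝ) • (P₂⁻¹ * (Eᴴ * Ã⁻¹ * E - P₂))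
  have hD₀ : D₀ᵀ * P₂ + P₂ * D₀ - Eᴴ * Ã⁻¹ * E = -P₂ := by
    rw [transpose_mul_add_mul_half_inv_mul (isSymm_diagonal p2)
      (isHermitian_iff_isSymm.1 (hN.sub hP₂)), sub_sub_cancel_left]
  refine ⟨⟨D₀, (posDef_neg_iff_dotProduct_mulVec (hF D₀)).1 (sufficient D₀ ?_)⟩, fun D hD => ?_⟩
  · rwa [hD₀, neg_neg, posDef_diagonal_iff]
  · rw [← hE, ← posDef_neg_iff_dotProduct_mulVec (hS D)] at hD
    exact (posDef_neg_iff_dotProduct_mulVec (hF D)).1 (sufficient D hD)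

/-- Adding `p` species: if `A` is diagonally stable with witness `P = diag p₁`,
then for any `B, C` and any positive diagonal `P₂`, there exists `D` making the
block matrix `F = [[A, B],[Cᵀ, D]]` diagonally stable with Lyapunov matrix
`diag(P, P₂)`; moreover the Schur condition
`DᵀP₂ + P₂D − (BᵀP + P₂Cᵀ) Ã⁻¹ (CP₂ + PB) < 0` (with `Ã = AᵀP + PA`) is
sufficient. -/
theorem block_extension_diagStable {n p : ℕ}
    (A : Matrix (Fin n) (Fin n) ℝ)
    (p1 : Fin n → ℝ) (hp1 : ∀ i, 0 < p1 i)
    (hstab : ∀ v : Fin n → ℝ, v ≠ 0 →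
      v ⬝ᵥ ((Aᵀ * Matrix.diagonal p1 + Matrix.diagonal p1 * A).mulVec v) < 0)
    (B C : Matrix (Fin n) (Fin p) ℝ)
    (p2 : Fin p → ℝ) (hp2 : ∀ i, 0 < p2 i) :
    (∃ D : Matrix (Fin p) (Fin p) ℝ,
      ∀ v : Fin n ⊕ Fin p → ℝ, v ≠ 0 →
        v ⬝ᵥ (((Matrix.fromBlocks A B Cᵀ D)ᵀ * Matrix.diagonal (Sum.elim p1 p2) +
          Matrix.diagonal (Sum.elim p1 p2) * Matrix.fromBlocks A B Cᵀ D).mulVec v) < 0) ∧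
    (∀ D : Matrix (Fin p) (Fin p) ℝ,
      (∀ w : Fin p → ℝ, w ≠ 0 →
        w ⬝ᵥ ((Dᵀ * Matrix.diagonal p2 + Matrix.diagonal p2 * D -
          (Bᵀ * Matrix.diagonal p1 + Matrix.diagonal p2 * Cᵀ) *
            (Aᵀ * Matrix.diagonal p1 + Matrix.diagonal p1 * A)⁻¹ *
          (C * Matrix.diagonal p2 + Matrix.diagonal p1 * B)).mulVec w) < 0) →
      ∀ v : Fin n ⊕ Fin p → ℝ, v ≠ 0 →
        v ⬝ᵥ (((Matrix.fromBlocks A B Cᵀ D)ᵀ * Matrix.diagonal (Sum.elim p1 p2) +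
          Matrix.diagonal (Sum.elim p1 p2) * Matrix.fromBlocks A B Cᵀ D).mulVec v) < 0) :=
  block_extension_diagStable_general A p1 hstab B C p2 hp2
end
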